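/- Let f : ℝ² → ℝ be a smooth function satisfying f(p+nq, q) = f(p,q) for all n ∈ ℤ and all (p,q) ∈ ℝ². Then for all integers i ≥ 1 and j ≥ 0, the partial derivative ∂^{i+j} f / ∂p^i ∂q^j vanishes at every point (p, 0). -/

import Mathlib

/-!
For `q ≠ 0` the slice `f (·, q)` is `q`-periodic, so each `∂ₚᵏ⁺¹ f (·, q)` has a zero within `|q|`
of every point (Rolle), and `f (·, 0)` is constant by continuity. By the mean value theorem, a bound
`|∂ₚᵏ⁺² f| ≤ C |q| ^ m` on `ℝ × [-1, 1]` then gives `|∂ₚᵏ⁺¹ f| ≤ C |q| ^ (m + 1)`, and the induction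
starts from boundedness, which periodicity reduces to a compact rectangle. Hence
`q ↦ ∂ₚⁱ f (p, q)` is `O(q ^ m)` at `0` for every `m`, so by Taylor's theorem it is flat at `0`.
-/

open Set Filter Topology Asymptotics Function

section OneVariable

variable {E : Type*} [NormedAddCommGroup E] [NormedSpace ℝ E]

theorem Function.Periodic.abs {α : Type*} {g : ℝ → α} {c : ℝ} (h : Periodic g c) : Periodic g |c| := by
  rcases abs_choice c with hc | hc <;> rw [hc]
  exacts [h, h.neg]

theorem Function.Periodic.iteratedDeriv {g : ℝ → E} {c : ℝ} (h : Periodic g c) (n : ℕ) :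
    Periodic (iteratedDeriv n g) c := fun x => by
  have hg : (fun z => g (z + c)) = g := funext h
  rw [← congrFun (iteratedDeriv_comp_add_const n g c) x, hg]

theorem Function.Periodic.exists_deriv_eq_zero_near {g : ℝ → ℝ} {c : ℝ}
    (hg : Differentiable ℝ g) (h : Periodic g c) (hc : c ≠ 0) (x : ℝ) :
    ∃ ξ, |ξ - x| ≤ |c| ∧ deriv g ξ = 0 := by
  wlog hc' : 0 < c generalizing c
  · simpa using this h.neg (neg_ne_zero.2 hc) (by linarith [lt_of_le_of_ne (not_lt.1 hc') hc])
  obtain ⟨ξ, ⟨hxξ, hξc⟩, hξ⟩ := exists_deriv_eq_zero (lt_add_of_pos_right x hc')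
    hg.continuous.continuousOn (h x).symm
  exact ⟨ξ, by rw [abs_of_pos hc', abs_le]; constructor <;> linarith, hξ⟩

theorem iteratedDeriv_eq_zero_of_isBigO_pow {g : ℝ → E} {n : ℕ} (hg : ContDiff ℝ n g)
    (hO : g =O[𝓝 0] fun x => x ^ (n + 1)) {i : ℕ} (hi : i ≤ n) : iteratedDeriv i g 0 = 0 := by
  induction i using Nat.strong_induction_on with
  | _ i ih =>
    set c := iteratedDeriv i g 0
    have htaylor : taylorWithinEval g i univ 0 = fun x : ℝ => (x ^ i / i.factorial) • c := by
      funext x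
      rw [taylor_within_apply, Finset.sum_range_succ, Finset.sum_eq_zero, zero_add]
      · simp [c, iteratedDerivWithin_univ, div_eq_inv_mul]
      · intro k hk
        have hki := Finset.mem_range.1 hk
        rw [iteratedDerivWithin_univ, ih k hki (by omega), smul_zero]
    -- the Taylor polynomial, which is `g` up to `o(x ^ i)`, is itself `o(x ^ i)` since `i ≤ n`
    have hT : (fun x : ℝ => (x ^ i / i.factorial) • c) =o[𝓝 0] fun x : ℝ => x ^ i := by
      have hrem : (fun x => g x - taylorWithinEval g i univ 0 x) =o[𝓝 0] fun x : ℝ => x ^ i := by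
        simpa using taylor_isLittleO_univ (x₀ := 0) (hg.of_le (by exact_mod_cast hi))
      have hg' : g =o[𝓝 0] fun x : ℝ => x ^ i :=
        hO.trans_isLittleO (isLittleO_pow_pow (by omega))
      simpa [htaylor] using hg'.sub hrem
    by_contra hc
    have hself : (fun x : ℝ => x ^ i) =o[𝓝 0] fun x => x ^ i := by
      rw [← isLittleO_norm_left, ← isLittleO_const_mul_left_iff
        (c := ‖c‖ / i.factorial) (by positivity)]
      refine hT.norm_left.congr_left fun x => ?_
      rw [norm_smul, norm_div, Real.norm_natCast]
      ring
    have hpow : ∀ᶠ x in 𝓝[≠] (0 : ℝ), x ^ i ≠ 0 :=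
      eventually_mem_nhdsWithin.mono fun x hx => pow_ne_zero i hx
    exact isLittleO_irrefl (hpow.frequently.filter_mono nhdsWithin_le_nhds) hself

end OneVariable

theorem contDiff_deriv_fst {E : Type*} [NormedAddCommGroup E] [NormedSpace ℝ E]
    {g : ℝ × ℝ → E} {n : WithTop ℕ∞} (hg : ContDiff ℝ (n + 1) g) :
    ContDiff ℝ n fun x : ℝ × ℝ => deriv (fun p => g (p, x.2)) x.1 := by
  have hfd : ContDiff ℝ n fun x : ℝ × ℝ => fderiv ℝ (fun p => g (p, x.2)) x.1 :=
    (hg.comp (contDiff_snd.prodMk (contDiff_snd.comp contDiff_fst))).fderiv_succ contDiff_fst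
  simpa only [fderiv_apply_one_eq_deriv] using hfd.clm_apply (contDiff_const (c := (1 : ℝ)))

theorem apply_snd_zero_eq_of_periodic {E : Type*} [TopologicalSpace E] [T2Space E]
    {g : ℝ × ℝ → E} (hg : Continuous g) (hper : ∀ q, Periodic (fun p => g (p, q)) q)
    (p p' : ℝ) : g (p', 0) = g (p, 0) := by
  have hq : Tendsto (fun n : ℕ => (p' - p) / n) atTop (𝓝 0) :=
    tendsto_const_div_atTop_nhds_zero_nat (p' - p)
  have heq : ∀ᶠ n : ℕ in atTop, g (p', (p' - p) / n) = g (p, (p' - p) / n) := by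
    filter_upwards [eventually_ne_atTop 0] with n hn
    have h := (hper ((p' - p) / n)).nat_mul n p
    rwa [mul_div_cancel₀ _ (Nat.cast_ne_zero.2 hn), add_sub_cancel] at h
  exact tendsto_nhds_unique
    (((hg.tendsto _).comp (tendsto_const_nhds.prodMk_nhds hq)).congr' heq)
    ((hg.tendsto _).comp (tendsto_const_nhds.prodMk_nhds hq))

noncomputable def iteratedDerivFst (f : ℝ × ℝ → ℝ) (k : ℕ) (x : ℝ × ℝ) : ℝ :=
  iteratedDeriv k (fun p => f (p, x.2)) x.1

section IteratedDerivFst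

variable {f : ℝ × ℝ → ℝ}

theorem deriv_iteratedDerivFst (k : ℕ) (p q : ℝ) :
    deriv (fun p' => iteratedDerivFst f k (p', q)) p = iteratedDerivFst f (k + 1) (p, q) := by
  simp only [iteratedDerivFst, iteratedDeriv_succ]

theorem contDiff_iteratedDerivFst (hf : ContDiff ℝ (⊤ : ℕ∞) f) (k : ℕ) :
    ContDiff ℝ (⊤ : ℕ∞) (iteratedDerivFst f k) := by
  induction k with
  | zero => exact hf
  | succ k ih =>
    have := contDiff_deriv_fst (n := (⊤ : ℕ∞)) (g := iteratedDerivFst f k) (by simpa using ih)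
    simpa only [deriv_iteratedDerivFst] using this

theorem differentiable_iteratedDerivFst (hf : ContDiff ℝ (⊤ : ℕ∞) f) (k : ℕ) (q : ℝ) :
    Differentiable ℝ fun p => iteratedDerivFst f k (p, q) :=
  ((contDiff_iteratedDerivFst hf k).comp (contDiff_id.prodMk contDiff_const)).differentiable
    (by simp)

theorem iteratedDerivFst_periodic (hper : ∀ q, Periodic (fun p => f (p, q)) q) (k : ℕ)
    (q : ℝ) : Periodic (fun p => iteratedDerivFst f k (p, q)) q :=
  (hper q).iteratedDeriv k

theorem iteratedDerivFst_succ_apply_snd_zero (hf : Continuous f)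
    (hper : ∀ q, Periodic (fun p => f (p, q)) q) (k : ℕ) (p : ℝ) :
    iteratedDerivFst f (k + 1) (p, 0) = 0 := by
  have hconst : (fun p' => f (p', 0)) = fun _ => f (0, 0) :=
    funext fun p' => apply_snd_zero_eq_of_periodic hf hper 0 p'
  simp [iteratedDerivFst, hconst, iteratedDeriv_const]

theorem iteratedDerivFst_succ_exists_zero_near (hf : ContDiff ℝ (⊤ : ℕ∞) f)
    (hper : ∀ q, Periodic (fun p => f (p, q)) q) (k : ℕ) {q : ℝ} (hq : q ≠ 0) (x : ℝ) :
    ∃ ξ, |ξ - x| ≤ |q| ∧ iteratedDerivFst f (k + 1) (ξ, q) = 0 := by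
  simpa only [deriv_iteratedDerivFst] using (iteratedDerivFst_periodic hper k q)
    |>.exists_deriv_eq_zero_near (differentiable_iteratedDerivFst hf k q) hq x

theorem iteratedDerivFst_succ_bounded (hf : ContDiff ℝ (⊤ : ℕ∞) f)
    (hper : ∀ q, Periodic (fun p => f (p, q)) q) (k : ℕ) :
    ∃ C, ∀ x q, |q| ≤ 1 → |iteratedDerivFst f (k + 1) (x, q)| ≤ C := by
  have hK : IsCompact (Icc (0 : ℝ) 1 ×ˢ Icc (-1 : ℝ) 1) := isCompact_Icc.prod isCompact_Icc
  obtain ⟨C, hC⟩ := hK.exists_bound_of_continuousOn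
    (contDiff_iteratedDerivFst hf (k + 1)).continuous.continuousOn
  refine ⟨C, fun x q hq => ?_⟩
  rcases eq_or_ne q 0 with rfl | hq0
  · rw [iteratedDerivFst_succ_apply_snd_zero hf.continuous hper, abs_zero]
    exact (norm_nonneg _).trans (hC (0, 0) (by simp))
  · obtain ⟨y, hy, hxy⟩ :=
      (iteratedDerivFst_periodic hper (k + 1) q).abs.exists_mem_Ico₀ (abs_pos.2 hq0) x
    rw [show iteratedDerivFst f (k + 1) (x, q) = iteratedDerivFst f (k + 1) (y, q) from hxy]
    exact hC (y, q) ⟨⟨hy.1, hy.2.le.trans hq⟩, abs_le.1 hq⟩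

theorem iteratedDerivFst_succ_le_pow (hf : ContDiff ℝ (⊤ : ℕ∞) f)
    (hper : ∀ q, Periodic (fun p => f (p, q)) q) (k m : ℕ) :
    ∃ C, ∀ x q, |q| ≤ 1 → |iteratedDerivFst f (k + 1) (x, q)| ≤ C * |q| ^ m := by
  induction m generalizing k with
  | zero => simpa using iteratedDerivFst_succ_bounded hf hper k
  | succ m ih =>
    obtain ⟨C, hC⟩ := ih (k + 1)
    have hC0 : 0 ≤ C := (abs_nonneg _).trans (by simpa using hC 0 1 (by norm_num))
    refine ⟨C, fun x q hq => ?_⟩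
    rcases eq_or_ne q 0 with rfl | hq0
    · simp [iteratedDerivFst_succ_apply_snd_zero hf.continuous hper]
    obtain ⟨ξ, hξx, hξ⟩ := iteratedDerivFst_succ_exists_zero_near hf hper k hq0 x
    have hmvt := convex_univ.norm_image_sub_le_of_norm_deriv_le
      (fun p _ => differentiable_iteratedDerivFst hf (k + 1) q p)
      (fun p _ => by simpa only [deriv_iteratedDerivFst, Real.norm_eq_abs] using hC p q hq)
      (mem_univ ξ) (mem_univ x)
    simp only [hξ, sub_zero, Real.norm_eq_abs] at hmvt
    calc |iteratedDerivFst f (k + 1) (x, q)| ≤ C * |q| ^ m * |x - ξ| := hmvt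
      _ ≤ C * |q| ^ m * |q| := mul_le_mul_of_nonneg_left (by rwa [abs_sub_comm]) (by positivity)
      _ = C * |q| ^ (m + 1) := by ring

theorem isBigO_iteratedDerivFst_succ (hf : ContDiff ℝ (⊤ : ℕ∞) f)
    (hper : ∀ q, Periodic (fun p => f (p, q)) q) (k m : ℕ) (p : ℝ) :
    (fun q => iteratedDerivFst f (k + 1) (p, q)) =O[𝓝 0] fun q => q ^ m := by
  obtain ⟨C, hC⟩ := iteratedDerivFst_succ_le_pow hf hper k m
  refine IsBigO.of_bound C ?_
  filter_upwards [Icc_mem_nhds (neg_neg_of_pos one_pos) one_pos] with q hq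
  simpa only [Real.norm_eq_abs, abs_pow] using hC p q (abs_le.2 hq)

end IteratedDerivFst

theorem stmt0 (f : ℝ × ℝ → ℝ) (hf : ContDiff ℝ (⊤ : ℕ∞) f)
    (hinv : ∀ (n : ℤ) (p q : ℝ), f (p + n * q, q) = f (p, q)) :
    ∀ (i j : ℕ), 1 ≤ i → ∀ p : ℝ,
      iteratedDeriv j (fun q : ℝ =>
        iteratedDeriv i (fun p' : ℝ => f (p', q)) p) 0 = 0 := by
  intro i j hi p
  obtain ⟨k, rfl⟩ := Nat.exists_eq_add_of_le' hi
  have hper : ∀ q, Periodic (fun p => f (p, q)) q := fun q p => by simpa using hinv 1 p q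
  have hsmooth : ContDiff ℝ j fun q => iteratedDerivFst f (k + 1) (p, q) :=
    ((contDiff_iteratedDerivFst hf _).comp (contDiff_const.prodMk contDiff_id)).of_le
      (by exact_mod_cast le_top)
  exact iteratedDeriv_eq_zero_of_isBigO_pow hsmooth
    (isBigO_iteratedDerivFst_succ hf hper k (j + 1) p) le_rfl
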